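/- Let X be a T₁ topological space that is not countably compact, and suppose that no cardinal μ ≤ d(X) is weakly inaccessible (i.e., every uncountable regular cardinal μ ≤ d(X) is not a limit cardinal). Then the product space X^{d(X)} is e-separable. -/

import Mathlib

/-!
A T₁ space that is not countably compact contains an injective sequence `e` with closed discrete
range, and `ℕ^κ` contains a closed discrete set of size `κ` for every infinite `κ` with no weakly
inaccessible cardinal up to it: by induction on `κ`, through successors `ν⁺` (code each ordinal
below `ν⁺` by its initial segment, of size `ν`) and singular cardinals (a disjoint sum over a
cofinal set), which are the only cases that occur.

For `κ = d(X)`, index a set of points of `X^κ` by the `κ` finite partial functions `κ ⇀ κ`: the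
point of `p` copies a dense subset of `X` on the domain of `p` and carries, elsewhere, `e` composed
with the `p`-th member of the closed discrete family in `ℕ^κ`. These points are dense. Those whose
domain has at most `n` elements form a closed discrete set: a point of `X^κ` with more than `n`
coordinates off `range e` has a neighbourhood missing all of them, and near any other point,
repeating every coordinate of `ℕ^κ` `4n + 1` times lets a neighbourhood read off the code of `p`,
hence `p`, by majority.
-/

open Cardinal Set

universe u

/-- A subset `D` of a topological space is closed discrete iff it is closed and
its subspace topology is discrete. -/
def ClosedDiscrete {X : Type u} [TopologicalSpace X] (D : Set X) : Prop :=
  IsClosed D ∧ DiscreteTopology D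

/-- A space is `e`-separable iff it has a dense set which is a countable union of
closed discrete sets. -/
def ESeparable (X : Type u) [TopologicalSpace X] : Prop :=
  ∃ D : ℕ → Set X, (∀ n, ClosedDiscrete (D n)) ∧ Dense (⋃ n, D n)

/-- The density of a space: the least cardinality of a dense subset. -/
noncomputable def density (X : Type u) [TopologicalSpace X] : Cardinal.{u} :=
  sInf {c | ∃ D : Set X, Dense D ∧ #D = c}

/-- The extent of a space: the supremum of the cardinalities of closed discrete subsets. -/
noncomputable def extent (X : Type u) [TopologicalSpace X] : Cardinal.{u} :=
  sSup {c | ∃ D : Set X, ClosedDiscrete D ∧ #D = c}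

/-- A space is countably compact iff every countable open cover has a finite subcover. -/
def CountablyCompact (X : Type u) [TopologicalSpace X] : Prop :=
  ∀ 𝒰 : Set (Set X), 𝒰.Countable → (∀ U ∈ 𝒰, IsOpen U) → ⋃₀ 𝒰 = Set.univ →
    ∃ 𝒱 ⊆ 𝒰, 𝒱.Finite ∧ ⋃₀ 𝒱 = Set.univ

open Filter Topology

/-- Read in the product `ℕ^I` of discrete spaces: the map `F` is injective and its range is closed
discrete, each point `w` having a basic neighbourhood, fixed on the finite set `C`, that meets the
range at most once. -/
def IsClosedDiscreteFamily {ι I : Type*} (F : ι → I → ℕ) : Prop :=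
  ∀ w : I → ℕ, ∃ C : Finset I, {α | ∀ c ∈ C, F α c = w c}.Subsingleton

def HasClosedDiscreteFamily (κ : Cardinal.{u}) : Prop :=
  ∃ (ι I : Type u) (F : ι → I → ℕ), #ι = κ ∧ #I = κ ∧ IsClosedDiscreteFamily F

theorem IsClosedDiscreteFamily.comp {ι ι' I : Type*} {F : ι → I → ℕ}
    (hF : IsClosedDiscreteFamily F) {f : ι' → ι} (hf : Function.Injective f) :
    IsClosedDiscreteFamily (F ∘ f) := fun w =>
  (hF w).imp fun _ hC _ ha _ hb => hf (hC ha hb)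

theorem isClosedDiscreteFamily_const {ι I : Type*} [Nonempty I] {f : ι → ℕ}
    (hf : Function.Injective f) : IsClosedDiscreteFamily fun α (_ : I) => f α := by
  intro w
  obtain ⟨c⟩ := ‹Nonempty I›
  exact ⟨{c}, fun a ha b hb => hf <| (ha c (Finset.mem_singleton_self c)).trans
    (hb c (Finset.mem_singleton_self c)).symm⟩

theorem hasClosedDiscreteFamily_aleph0 : HasClosedDiscreteFamily (ℵ₀ : Cardinal.{u}) :=
  ⟨ULift ℕ, ULift ℕ, _, by simp, by simp, isClosedDiscreteFamily_const ULift.down_injective⟩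

section Successor

variable {ι I T : Type*} [LinearOrder T] (g : ι → I → ℕ) (emb : ∀ t : T, Iio t ↪ ι)

/-- Every `α < ξ` is coded by `g` through `emb ξ` on the coordinates `(true, ξ, ·)`, and every
`ξ < α` through `emb α` on the coordinates `(false, ξ, ·)`; the value `0` marks the coordinates on
which no such comparison holds. -/
def succFamily : T → Bool × T × I → ℕ
  | α, (true, ξ, c) => if h : α < ξ then g (emb ξ ⟨α, h⟩) c + 1 else 0
  | α, (false, ξ, c) => if h : ξ < α then g (emb α ⟨ξ, h⟩) c + 1 else 0

variable {g emb}

theorem succFamily_true_of_lt {α ξ : T} (h : α < ξ) (c : I) :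
    succFamily g emb α (true, ξ, c) = g (emb ξ ⟨α, h⟩) c + 1 :=
  dif_pos h

theorem succFamily_false_of_lt {α ξ : T} (h : ξ < α) (c : I) :
    succFamily g emb α (false, ξ, c) = g (emb α ⟨ξ, h⟩) c + 1 :=
  dif_pos h

theorem succFamily_true_eq_zero_iff {α ξ : T} {c : I} :
    succFamily g emb α (true, ξ, c) = 0 ↔ ξ ≤ α := by
  simp only [succFamily]
  split_ifs with h
  · simp [h.not_ge]
  · simp [not_lt.1 h]

theorem IsClosedDiscreteFamily.exists_succFamily_of_ne_zero (hg : IsClosedDiscreteFamily g)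
    {w : Bool × T × I → ℕ} {ξ : T} {c₁ : I} (hw : w (true, ξ, c₁) ≠ 0) :
    ∃ C : Finset (Bool × T × I), {α | ∀ q ∈ C, succFamily g emb α q = w q}.Subsingleton := by
  classical
  obtain ⟨C₀, hC₀⟩ := hg fun c => w (true, ξ, c) - 1
  refine ⟨insert (true, ξ, c₁) (C₀.image fun c => (true, ξ, c)), ?_⟩
  have hcode : ∀ α, (∀ q ∈ insert (true, ξ, c₁) (C₀.image fun c => (true, ξ, c)),
      succFamily g emb α q = w q) →
      ∃ h : α < ξ, ∀ c ∈ C₀, g (emb ξ ⟨α, h⟩) c = w (true, ξ, c) - 1 := by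
    intro α hα
    have hlt : α < ξ := not_le.1 fun hle =>
      hw ((hα _ (Finset.mem_insert_self _ _)).symm.trans (succFamily_true_eq_zero_iff.2 hle))
    refine ⟨hlt, fun c hc => ?_⟩
    have := hα _ (Finset.mem_insert_of_mem (Finset.mem_image_of_mem _ hc))
    rw [succFamily_true_of_lt hlt] at this
    omega
  intro α hα β hβ
  obtain ⟨_, hα⟩ := hcode α hα
  obtain ⟨_, hβ⟩ := hcode β hβ
  exact congrArg Subtype.val ((emb ξ).injective (hC₀ hα hβ))

/-- If every `M ξ` is inhabited, a choice from them is a map `T → ι` identifying some `ξ₁ ≠ ξ₂`,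
and then no injective `emb α` can send both into their `M`. -/
theorem exists_pair_not_both_mem_of_not_injective {M : T → Set ι} (hM : ∀ ξ, (M ξ).Subsingleton)
    (hT : ∀ f : T → ι, ¬Function.Injective f) :
    ∃ ξ₁ ξ₂ : T, ∀ α (h₁ : ξ₁ < α) (h₂ : ξ₂ < α),
      ¬(emb α ⟨ξ₁, h₁⟩ ∈ M ξ₁ ∧ emb α ⟨ξ₂, h₂⟩ ∈ M ξ₂) := by
  by_cases hne : ∀ ξ, (M ξ).Nonempty
  · choose σ hσ using hne
    obtain ⟨ξ₁, ξ₂, hσ₁₂, hne₁₂⟩ := Function.not_injective_iff.1 (hT σ)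
    refine ⟨ξ₁, ξ₂, fun α h₁ h₂ ⟨hm₁, hm₂⟩ => hne₁₂ ?_⟩
    exact congrArg Subtype.val <| (emb α).injective <|
      (hM ξ₁ hm₁ (hσ ξ₁)).trans (hσ₁₂.trans (hM ξ₂ hm₂ (hσ ξ₂)).symm)
  · push Not at hne
    obtain ⟨ξ, hξ⟩ := hne
    exact ⟨ξ, ξ, fun α h _ ⟨hm, _⟩ => hξ.subset hm⟩

theorem IsClosedDiscreteFamily.exists_succFamily_of_forall_eq_zero [NoMaxOrder T]
    (hg : IsClosedDiscreteFamily g) (hT : ∀ f : T → ι, ¬Function.Injective f) (c₀ : I)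
    {w : Bool × T × I → ℕ} (hw : ∀ ξ c, w (true, ξ, c) = 0) :
    ∃ C : Finset (Bool × T × I), {α | ∀ q ∈ C, succFamily g emb α q = w q}.Subsingleton := by
  classical
  choose C hC using fun ξ => hg fun c => w (false, ξ, c) - 1
  obtain ⟨ξ₁, ξ₂, hξ⟩ := exists_pair_not_both_mem_of_not_injective (emb := emb) (fun ξ => hC ξ) hT
  obtain ⟨ξ', hξ'⟩ := exists_gt (max ξ₁ ξ₂)
  let block : T → Finset (Bool × T × I) := fun ξ => (C ξ).image fun c => (false, ξ, c)
  refine ⟨insert (true, ξ', c₀) (block ξ₁ ∪ block ξ₂), fun α hα => (?_ : False).elim⟩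
  have hle : ξ' ≤ α := succFamily_true_eq_zero_iff.1 <|
    (hα _ (Finset.mem_insert_self _ _)).trans (hw ξ' c₀)
  have hcode : ∀ ξ (h : ξ < α), block ξ ⊆ block ξ₁ ∪ block ξ₂ →
      ∀ c ∈ C ξ, g (emb α ⟨ξ, h⟩) c = w (false, ξ, c) - 1 := by
    intro ξ h hsub c hc
    have := hα _ (Finset.mem_insert_of_mem (hsub (Finset.mem_image_of_mem _ hc)))
    rw [succFamily_false_of_lt h] at this
    omega
  have h₁ : ξ₁ < α := (le_max_left _ _).trans_lt (hξ'.trans_le hle)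
  have h₂ : ξ₂ < α := (le_max_right _ _).trans_lt (hξ'.trans_le hle)
  exact hξ α h₁ h₂ ⟨hcode ξ₁ h₁ Finset.subset_union_left,
    hcode ξ₂ h₂ Finset.subset_union_right⟩

theorem isClosedDiscreteFamily_succFamily [NoMaxOrder T] [Nonempty I]
    (hg : IsClosedDiscreteFamily g) (hT : ∀ f : T → ι, ¬Function.Injective f) :
    IsClosedDiscreteFamily (succFamily g emb) := by
  intro w
  by_cases hw : ∃ ξ c, w (true, ξ, c) ≠ 0
  · obtain ⟨ξ, c, hc⟩ := hw
    exact hg.exists_succFamily_of_ne_zero hc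
  · push Not at hw
    exact hg.exists_succFamily_of_forall_eq_zero hT (Classical.arbitrary I) hw

end Successor

theorem HasClosedDiscreteFamily.succ {ν : Cardinal.{u}} (hν : ℵ₀ ≤ ν)
    (h : HasClosedDiscreteFamily ν) : HasClosedDiscreteFamily (Order.succ ν) := by
  obtain ⟨ι, I, g, rfl, hI, hg⟩ := h
  have hsucc : ℵ₀ ≤ Order.succ #ι := hν.trans (Order.le_succ _)
  have := Cardinal.noMaxOrder hsucc
  have : Nonempty I := Cardinal.mk_ne_zero_iff.1 (hI ▸ (aleph0_pos.trans_le hν).ne')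
  have emb : ∀ t : (Order.succ #ι).ord.ToType, Iio t ↪ ι := fun t =>
    Classical.choice <| Cardinal.le_def _ _ |>.1 <| Order.lt_succ_iff.1 <| by
      simpa using Cardinal.mk_Iio_lt t
  have hT : ∀ f : (Order.succ #ι).ord.ToType → ι, ¬Function.Injective f := fun f hf =>
    (Order.lt_succ #ι).not_ge <| by simpa using Cardinal.mk_le_of_injective hf
  refine ⟨_, _, succFamily g emb, Cardinal.mk_ord_toType _, ?_,
    isClosedDiscreteFamily_succFamily hg hT⟩
  calc #(Bool × (Order.succ #ι).ord.ToType × I) = 2 * (Order.succ #ι * #ι) := by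
        simp [mk_prod, hI]
    _ = Order.succ #ι := by
      rw [mul_eq_left hsucc (Order.le_succ _) (aleph0_pos.trans_le hν).ne',
        mul_eq_right hsucc (ofNat_lt_aleph0.le.trans hsucc) two_ne_zero]

section Sigma

variable {B ι₀ I₀ : Type*} {ι J : B → Type*}

/-- The `I₀`-coordinates code the block `b` of a point `⟨b, d⟩` through `g₀ ∘ tag`, and the
coordinates `J b` code `d` inside that block through `g b`. -/
noncomputable def sigmaFamily (g₀ : ι₀ → I₀ → ℕ) (tag : B → ι₀) (g : ∀ b, ι b → J b → ℕ) :
    (Σ b, ι b) → I₀ ⊕ (Σ b, J b) → ℕ :=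
  fun p => Sum.elim (g₀ (tag p.1)) (Function.extend (Sigma.mk p.1) (g p.1 p.2) 0)

theorem sigmaFamily_inr_mk (g₀ : ι₀ → I₀ → ℕ) (tag : B → ι₀) (g : ∀ b, ι b → J b → ℕ)
    (b : B) (d : ι b) (c : J b) : sigmaFamily g₀ tag g ⟨b, d⟩ (.inr ⟨b, c⟩) = g b d c :=
  sigma_mk_injective.extend_apply _ _ c

theorem isClosedDiscreteFamily_sigmaFamily {g₀ : ι₀ → I₀ → ℕ} (hg₀ : IsClosedDiscreteFamily g₀)
    {tag : B → ι₀} (htag : Function.Injective tag) {g : ∀ b, ι b → J b → ℕ}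
    (hg : ∀ b, IsClosedDiscreteFamily (g b)) :
    IsClosedDiscreteFamily (sigmaFamily g₀ tag g) := by
  classical
  intro w
  obtain ⟨C₀, hC₀⟩ := hg₀ (w ∘ .inl)
  by_cases hb : ∃ b, ∀ c ∈ C₀, g₀ (tag b) c = w (.inl c)
  · obtain ⟨b, hb⟩ := hb
    obtain ⟨C, hC⟩ := hg b fun c => w (.inr ⟨b, c⟩)
    refine ⟨C₀.disjSum (C.image (Sigma.mk b)), ?_⟩
    have hblock : ∀ p : Σ b, ι b, (∀ q ∈ C₀.disjSum (C.image (Sigma.mk b)),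
        sigmaFamily g₀ tag g p q = w q) → p.1 = b := fun p hp =>
      htag <| hC₀ (fun c hc => hp (.inl c) (Finset.inl_mem_disjSum.2 hc)) hb
    have hcode : ∀ d, (∀ q ∈ C₀.disjSum (C.image (Sigma.mk b)),
        sigmaFamily g₀ tag g ⟨b, d⟩ q = w q) → ∀ c ∈ C, g b d c = w (.inr ⟨b, c⟩) :=
      fun d hd c hc => (sigmaFamily_inr_mk g₀ tag g b d c).symm.trans <|
        hd _ (Finset.inr_mem_disjSum.2 (Finset.mem_image_of_mem _ hc))
    rintro ⟨b₁, d₁⟩ h₁ ⟨b₂, d₂⟩ h₂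
    obtain rfl := hblock _ h₁
    obtain rfl := hblock _ h₂
    rw [hC (hcode d₁ h₁) (hcode d₂ h₂)]
  · refine ⟨C₀.disjSum ∅, fun p hp => (hb ⟨p.1, fun c hc => ?_⟩).elim⟩
    exact hp (.inl c) (Finset.inl_mem_disjSum.2 hc)

end Sigma

theorem hasClosedDiscreteFamily_sum {B : Type u} {κ : B → Cardinal.{u}}
    (hB : HasClosedDiscreteFamily #B) (hκ : ∀ b, HasClosedDiscreteFamily (κ b))
    (h₀ : ℵ₀ ≤ sum κ) (hBκ : #B ≤ sum κ) : HasClosedDiscreteFamily (sum κ) := by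
  obtain ⟨ι₀, I₀, g₀, hι₀, hI₀, hg₀⟩ := hB
  choose ι J g hι hJ hg using hκ
  obtain ⟨tag⟩ := Cardinal.eq.1 hι₀.symm
  refine ⟨_, _, sigmaFamily g₀ tag g, ?_, ?_,
    isClosedDiscreteFamily_sigmaFamily hg₀ tag.injective hg⟩
  · simp [mk_sigma, hι]
  · simp [mk_sigma, hJ, hI₀, add_eq_right h₀ hBκ]

theorem exists_sum_eq_of_not_isRegular {κ : Cardinal.{u}} (hκ : ℵ₀ ≤ κ) (hr : ¬κ.IsRegular) :
    ∃ (B : Type u) (f : B → Cardinal.{u}), ℵ₀ ≤ #B ∧ #B < κ ∧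
      (∀ b, ℵ₀ ≤ f b ∧ f b < κ) ∧ sum f = κ := by
  have := Cardinal.noMaxOrder hκ
  have := Cardinal.nonempty_ord_toType (aleph0_pos.trans_le hκ).ne'
  obtain ⟨S, hS, hScard⟩ := Order.exists_cof_eq κ.ord.ToType
  have hS₀ : ℵ₀ ≤ #S := hScard ▸ Order.aleph0_le_cof
  have hSκ : #S < κ := by
    refine lt_of_le_of_ne ?_ fun h => hr ⟨hκ, h ▸ le_of_eq ?_⟩
    · simpa [hScard, Ordinal.cof_toType] using Ordinal.cof_ord_le κ
    · simp [hScard, Ordinal.cof_toType]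
  have hIic : ∀ s : κ.ord.ToType, #(Iic s) < κ := fun s => by
    rw [← Iio_insert]
    exact mk_insert_le.trans_lt <| add_lt_of_lt hκ (by simpa using Cardinal.mk_Iio_lt s)
      (one_lt_aleph0.trans_le hκ)
  refine ⟨S, fun s => #(Iic s.1) ⊔ #S, hS₀, hSκ, fun s => ⟨le_sup_of_le_right hS₀,
    max_lt (hIic s) hSκ⟩, le_antisymm ?_ ?_⟩
  · calc sum (fun s : S => #(Iic s.1) ⊔ #S) ≤ sum fun _ : S => κ :=
          sum_le_sum _ _ fun s => (max_lt (hIic s) hSκ).le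
      _ = κ := by rw [sum_const', mul_eq_right hκ hSκ.le (aleph0_pos.trans_le hS₀).ne']
  · have hcover : (univ : Set κ.ord.ToType) ⊆ ⋃ s : S, Iic s.1 := fun x _ => by
      obtain ⟨s, hs, hxs⟩ := hS x
      exact mem_iUnion.2 ⟨⟨s, hs⟩, hxs⟩
    calc κ = #(univ : Set κ.ord.ToType) := by simp
      _ ≤ #(⋃ s : S, Iic s.1) := mk_le_mk_of_subset hcover
      _ ≤ sum fun s : S => #(Iic s.1) := mk_iUnion_le_sum_mk
      _ ≤ sum fun s : S => #(Iic s.1) ⊔ #S := sum_le_sum _ _ fun _ => le_sup_left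

theorem hasClosedDiscreteFamily_of_forall_isRegular_eq_succ {κ : Cardinal.{u}} (hκ : ℵ₀ ≤ κ)
    (hsucc : ∀ μ ≤ κ, ℵ₀ < μ → μ.IsRegular → ∃ ν < μ, Order.succ ν = μ) :
    HasClosedDiscreteFamily κ := by
  induction κ using WellFoundedLT.induction with
  | _ κ ih =>
  have ih' : ∀ μ < κ, ℵ₀ ≤ μ → HasClosedDiscreteFamily μ := fun μ hμ hμ₀ =>
    ih μ hμ hμ₀ fun μ' hμ' => hsucc μ' (hμ'.trans hμ.le)
  rcases hκ.eq_or_lt with rfl | hlt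
  · exact hasClosedDiscreteFamily_aleph0
  by_cases hr : κ.IsRegular
  · obtain ⟨ν, hνκ, rfl⟩ := hsucc κ le_rfl hlt hr
    have hν : ℵ₀ ≤ ν := not_lt.1 fun h => hlt.not_ge (Order.succ_le_of_lt h)
    exact (ih' ν hνκ hν).succ hν
  · obtain ⟨B, f, hB₀, hBκ, hf, rfl⟩ := exists_sum_eq_of_not_isRegular hκ hr
    exact hasClosedDiscreteFamily_sum (ih' _ hBκ hB₀) (fun b => ih' _ (hf b).2 (hf b).1) hκ hBκ.le

section Topology

variable {X : Type*} [TopologicalSpace X]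

theorem closedDiscrete_of_forall_not_accPt {D : Set X} (h : ∀ x, ¬AccPt x (𝓟 D)) :
    ClosedDiscrete D :=
  ⟨isClosed_iff_accPt.2 fun x hx => (h x hx).elim, discreteTopology_of_noAccPts fun x _ => h x⟩

theorem not_accPt_of_finite_inter [T1Space X] {D U : Set X} {x : X} (hU : U ∈ 𝓝 x)
    (hD : (U ∩ D).Finite) : ¬AccPt x (𝓟 D) := fun h => Set.Infinite.of_accPt (h.nhds_inter hU) hD

theorem exists_mem_nhds_inter_subset_singleton {C : Set X} {x : X} (h : ¬AccPt x (𝓟 C)) :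
    ∃ U ∈ 𝓝 x, U ∩ C ⊆ {x} := by
  simpa [accPt_iff_nhds, subset_def, and_imp] using h

theorem countablyCompact_of_countablyCompactSpace [CountablyCompactSpace X] :
    CountablyCompact X := by
  intro 𝒰 h𝒰 hopen hcover
  obtain ⟨𝒱, h𝒱𝒰, h𝒱, hcover'⟩ :=
    (isCountablyCompact_univ_iff.2 ‹_›).elim_finite_subcover_image (U := id) h𝒰 hopen
      (by simp [← sUnion_eq_biUnion, hcover])
  exact ⟨𝒱, h𝒱𝒰, h𝒱, univ_subset_iff.1 (by simpa [← sUnion_eq_biUnion] using hcover')⟩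

theorem exists_injective_forall_not_accPt_range [T1Space X] (h : ¬CountablyCompact X) :
    ∃ e : ℕ → X, Function.Injective e ∧ ∀ x, ¬AccPt x (𝓟 (range e)) := by
  have : ¬IsCountablyCompact (univ : Set X) := fun h' =>
    h (have := isCountablyCompact_univ_iff.1 h'; countablyCompact_of_countablyCompactSpace)
  simp only [isCountablyCompact_iff_infinite_subset_has_accPt, subset_univ, mem_univ,
    true_and, not_forall, not_exists] at this
  obtain ⟨E, -, hE, hacc⟩ := this
  refine ⟨(↑) ∘ hE.natEmbedding, Subtype.val_injective.comp (hE.natEmbedding _).injective,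
    fun x hx => hacc x (hx.mono ?_)⟩
  exact principal_mono.2 (range_subset_iff.2 fun n => (hE.natEmbedding _ n).2)

end Topology

theorem exists_dense_mk_eq_density (X : Type u) [TopologicalSpace X] :
    ∃ D : Set X, Dense D ∧ #D = density X :=
  csInf_mem (s := {c | ∃ D : Set X, Dense D ∧ #D = c}) ⟨_, univ, dense_univ, rfl⟩

theorem exists_dense_range_density_out (X : Type u) [TopologicalSpace X] :
    ∃ s : (density X).out → X, Dense (range s) := by
  obtain ⟨D, hD, hDcard⟩ := exists_dense_mk_eq_density X
  obtain ⟨φ⟩ := Cardinal.eq.1 (hDcard.trans (mk_out _).symm)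
  exact ⟨(↑) ∘ φ.symm, by rwa [φ.symm.surjective.range_comp, Subtype.range_coe]⟩

theorem aleph0_le_density (X : Type u) [TopologicalSpace X] [T1Space X] [Infinite X] :
    ℵ₀ ≤ density X := by
  obtain ⟨D, hD, hDcard⟩ := exists_dense_mk_eq_density X
  refine hDcard ▸ not_lt.1 fun hfin => ?_
  have hDfin : D.Finite := lt_aleph0_iff_set_finite.1 hfin
  have hDuniv : D = Set.univ := by rw [← hDfin.isClosed.closure_eq, hD.closure_eq]
  exact infinite_univ (hDuniv ▸ hDfin)

section Majority

variable {α β : Type*} [DecidableEq β] [Nonempty β]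

/-- An arbitrary value when no value is taken on more than half of `s`. -/
noncomputable def majority (s : Finset α) (u : α → β) : β :=
  Classical.epsilon fun v => 2 * (s.filter fun a => u a ≠ v).card < s.card

theorem majority_eq {s : Finset α} {u : α → β} {v : β}
    (h : 2 * (s.filter fun a => u a ≠ v).card < s.card) : majority s u = v := by
  have hmaj : 2 * (s.filter fun a => u a ≠ majority s u).card < s.card :=
    Classical.epsilon_spec (p := fun v => 2 * (s.filter fun a => u a ≠ v).card < s.card) ⟨v, h⟩
  by_contra hne
  have hsplit := Finset.card_filter_add_card_filter_not (s := s) fun a => u a ≠ v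
  have hsub : (s.filter fun a => ¬u a ≠ v).card ≤ (s.filter fun a => u a ≠ majority s u).card :=
    Finset.card_le_card <| Finset.monotone_filter_right s fun a _ ha h' =>
      hne (h'.symm.trans (not_not.1 ha))
  omega

end Majority

theorem card_filter_le_of_forall_finset_subset {J : Type*} {σ : ℕ → J}
    (hσ : Function.Injective σ) {A : Set J} {n : ℕ} (hA : ∀ S : Finset J, ↑S ⊆ A → S.card ≤ n)
    (t : Finset ℕ) (p : ℕ → Prop) [DecidablePred p] (hp : ∀ i ∈ t, p i → σ i ∈ A) :
    (t.filter p).card ≤ n := by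
  classical
  rw [← Finset.card_image_of_injective _ hσ]
  refine hA _ fun c hc => ?_
  obtain ⟨i, hi, rfl⟩ := Finset.mem_image.1 hc
  exact hp i (Finset.mem_filter.1 hi).1 (Finset.mem_filter.1 hi).2

abbrev Pattern (J : Type*) := Σ S : Finset J, S → J

theorem mk_pattern_le (J : Type u) [Infinite J] : #(Pattern J) ≤ #J := by
  rw [mk_sigma]
  calc sum (fun S : Finset J => #(S → J)) ≤ sum fun _ : Finset J => #J :=
        sum_le_sum _ _ fun S => by
          rw [← power_def, mk_coe_finset, power_natCast]
          exact power_nat_le (infinite_iff.1 ‹_›)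
    _ = #J := by
      rw [sum_const', mk_finset_of_infinite, mul_eq_self (infinite_iff.1 ‹_›)]

section Patterns

variable {X J I : Type*} (s : J → X) (e : ℕ → X) (G : Pattern J → I → ℕ)
  (ψ : J ≃ I × ℕ)

open Classical in
/-- The pattern `⟨S, g⟩` fixes the coordinates in `S` to `s ∘ g`; every other coordinate `c`
carries the point `e k`, where `k` is the value of the code `G ⟨S, g⟩` at the column `(ψ c).1`.
Each column is repeated on the `ℕ` coordinates `ψ.symm (β, ·)`, so that finitely many fixed
coordinates cannot hide it. -/
noncomputable def patternPoint (p : Pattern J) : J → X :=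
  fun c => if hc : c ∈ p.1 then s (p.2 ⟨c, hc⟩) else e (G p (ψ c).1)

variable {s e G ψ} in
theorem patternPoint_of_mem {p : Pattern J} {c : J} (hc : c ∈ p.1) :
    patternPoint s e G ψ p c = s (p.2 ⟨c, hc⟩) :=
  dif_pos hc

variable {s e G ψ} in
theorem patternPoint_of_not_mem {p : Pattern J} {c : J} (hc : c ∉ p.1) :
    patternPoint s e G ψ p c = e (G p (ψ c).1) :=
  dif_neg hc

theorem dense_range_patternPoint [TopologicalSpace X] (hs : Dense (range s)) :
    Dense (range (patternPoint s e G ψ)) := by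
  refine dense_iff_inter_open.2 fun O hO ⟨f, hf⟩ => ?_
  obtain ⟨S, u, hu, hSO⟩ := isOpen_pi_iff.1 hO f hf
  have : ∀ c : S, ∃ j, s j ∈ u c := fun c => by
    obtain ⟨_, ⟨j, rfl⟩, hj⟩ := hs.exists_mem_open (hu c c.2).1 ⟨f c, (hu c c.2).2⟩
    exact ⟨j, hj⟩
  choose g hg using this
  refine ⟨patternPoint s e G ψ ⟨S, g⟩, hSO fun c hc => ?_, mem_range_self _⟩
  rw [patternPoint_of_mem (Finset.mem_coe.1 hc)]
  exact hg ⟨c, hc⟩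

variable {s e G ψ} {V : X → Set X}

theorem apply_code_eq_of_patternPoint_mem (hVe : ∀ x k, e k ∈ V x → e k = x) {p : Pattern J}
    {c : J} (hc : c ∉ p.1) {y : J → X} (h : patternPoint s e G ψ p c ∈ V (y c)) :
    e (G p (ψ c).1) = y c :=
  hVe _ _ (by rwa [patternPoint_of_not_mem hc] at h)

theorem apply_code_eq_invFun_of_patternPoint_mem (he : Function.Injective e)
    (hVe : ∀ x k, e k ∈ V x → e k = x) {p : Pattern J} {c : J} (hc : c ∉ p.1) {y : J → X}
    (hy : y c ∈ range e) (h : patternPoint s e G ψ p c ∈ V (y c)) :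
    G p (ψ c).1 = Function.invFun e (y c) :=
  he ((apply_code_eq_of_patternPoint_mem hVe hc h).trans (Function.invFun_eq hy).symm)

theorem exists_nhds_inter_image_patternPoint_eq_empty [TopologicalSpace X]
    (hV : ∀ x, V x ∈ 𝓝 x) (hVe : ∀ x k, e k ∈ V x → e k = x) {y : J → X} {n : ℕ}
    {S : Finset J} (hS : ↑S ⊆ {c | y c ∉ range e}) (hn : n < S.card) :
    ∃ U ∈ 𝓝 y, U ∩ patternPoint s e G ψ '' {p | p.1.card ≤ n} = ∅ := by
  refine ⟨(S : Set J).pi fun c => V (y c), set_pi_mem_nhds S.finite_toSet fun c _ => hV _, ?_⟩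
  refine eq_empty_of_forall_notMem ?_
  rintro _ ⟨hU, p, hp, rfl⟩
  have hSp : S ⊆ p.1 := fun c hc => by_contra fun hcp =>
    hS hc ⟨_, apply_code_eq_of_patternPoint_mem hVe hcp (hU c hc)⟩
  exact (hn.trans_le ((Finset.card_le_card hSp).trans hp)).false

/-- With at most `n` coordinates of `y` off `range e`, and at most `n` fixed by a pattern, more
than half of the `4 * n + 1` copies of each column still read off the code of the pattern. -/
theorem exists_nhds_inter_image_patternPoint_subsingleton [TopologicalSpace X]
    (he : Function.Injective e) (hV : ∀ x, V x ∈ 𝓝 x) (hVe : ∀ x k, e k ∈ V x → e k = x)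
    (hG : IsClosedDiscreteFamily G) {y : J → X} {n : ℕ}
    (hB : ∀ S : Finset J, ↑S ⊆ {c | y c ∉ range e} → S.card ≤ n) :
    ∃ U ∈ 𝓝 y, (U ∩ patternPoint s e G ψ '' {p | p.1.card ≤ n}).Subsingleton := by
  classical
  let slot : I → ℕ → J := fun β i => ψ.symm (β, i)
  let w : I → ℕ := fun β =>
    majority (Finset.range (4 * n + 1)) fun i => Function.invFun e (y (slot β i))
  obtain ⟨C, hC⟩ := hG w
  let S : Finset J :=
    ((C ×ˢ Finset.range (4 * n + 1)).image ψ.symm).filter fun c => y c ∈ range e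
  refine ⟨(S : Set J).pi fun c => V (y c), set_pi_mem_nhds S.finite_toSet fun c _ => hV _, ?_⟩
  have hcode : ∀ p : Pattern J, p.1.card ≤ n →
      patternPoint s e G ψ p ∈ (S : Set J).pi (fun c => V (y c)) → ∀ β ∈ C, G p β = w β := by
    intro p hp hpU β hβ
    have hslot : Function.Injective (slot β) := fun i j hij => by simpa [slot] using hij
    have hbad : ∀ i ∈ Finset.range (4 * n + 1), Function.invFun e (y (slot β i)) ≠ G p β →
        slot β i ∈ {c | y c ∉ range e} ∨ slot β i ∈ p.1 := by
      refine fun i hi hne => or_iff_not_imp_right.2 fun hp₁ hy => hne ?_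
      have hS : slot β i ∈ S := Finset.mem_filter.2
        ⟨Finset.mem_image.2 ⟨(β, i), Finset.mem_product.2 ⟨hβ, hi⟩, rfl⟩, hy⟩
      simpa [slot] using (apply_code_eq_invFun_of_patternPoint_mem he hVe hp₁ hy (hpU _ hS)).symm
    have h₁ := card_filter_le_of_forall_finset_subset hslot hB (Finset.range (4 * n + 1))
      (fun i => slot β i ∈ {c | y c ∉ range e}) fun _ _ h => h
    have h₂ := card_filter_le_of_forall_finset_subset hslot (A := p.1)
      (fun S hS => (Finset.card_le_card (Finset.coe_subset.1 hS)).trans hp)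
      (Finset.range (4 * n + 1)) (fun i => slot β i ∈ p.1) fun _ _ h => h
    have hsub := Finset.card_le_card (Finset.monotone_filter_right _ hbad)
    rw [Finset.filter_or] at hsub
    have := hsub.trans (Finset.card_union_le _ _)
    refine (majority_eq ?_).symm
    rw [Finset.card_range]
    omega
  rintro _ ⟨hU, p, hp, rfl⟩ _ ⟨hU', p', hp', rfl⟩
  rw [hC (hcode p hp hU) (hcode p' hp' hU')]

variable [TopologicalSpace X] [T1Space X]

theorem closedDiscrete_image_patternPoint (he : Function.Injective e)
    (hE : ∀ x, ¬AccPt x (𝓟 (range e))) (hG : IsClosedDiscreteFamily G) (n : ℕ) :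
    ClosedDiscrete (patternPoint s e G ψ '' {p | p.1.card ≤ n}) := by
  choose V hV hVe using fun x => exists_mem_nhds_inter_subset_singleton (hE x)
  have hVe' : ∀ x k, e k ∈ V x → e k = x := fun x k hk => hVe x ⟨hk, mem_range_self k⟩
  refine closedDiscrete_of_forall_not_accPt fun y => ?_
  obtain ⟨U, hU, hUD⟩ :
      ∃ U ∈ 𝓝 y, (U ∩ patternPoint s e G ψ '' {p | p.1.card ≤ n}).Subsingleton := by
    by_cases hB : ∃ S : Finset J, ↑S ⊆ {c | y c ∉ range e} ∧ n < S.card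
    · obtain ⟨S, hS, hn⟩ := hB
      obtain ⟨U, hU, hUD⟩ := exists_nhds_inter_image_patternPoint_eq_empty hV hVe' hS hn
      exact ⟨U, hU, hUD ▸ subsingleton_empty⟩
    · push Not at hB
      exact exists_nhds_inter_image_patternPoint_subsingleton he hV hVe' hG hB
  exact not_accPt_of_finite_inter hU hUD.finite

theorem eSeparable_pi_of_isClosedDiscreteFamily (he : Function.Injective e)
    (hE : ∀ x, ¬AccPt x (𝓟 (range e))) (hs : Dense (range s)) (ψ : J ≃ I × ℕ)
    (hG : IsClosedDiscreteFamily G) : ESeparable (J → X) :=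
  ⟨fun n => patternPoint s e G ψ '' {p | p.1.card ≤ n},
    closedDiscrete_image_patternPoint he hE hG,
    (dense_range_patternPoint s e G ψ hs).mono <| range_subset_iff.2 fun p =>
      mem_iUnion.2 ⟨p.1.card, mem_image_of_mem _ (le_refl p.1.card)⟩⟩

end Patterns

theorem eSeparable_pi_of_hasClosedDiscreteFamily {X J : Type u} [TopologicalSpace X] [T1Space X]
    {e : ℕ → X} (he : Function.Injective e) (hE : ∀ x, ¬AccPt x (𝓟 (range e))) {s : J → X}
    (hs : Dense (range s)) (hJ : ℵ₀ ≤ #J) (hF : HasClosedDiscreteFamily #J) :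
    ESeparable (J → X) := by
  obtain ⟨ι, I, F, hι, hI, hF⟩ := hF
  have : Infinite J := infinite_iff.2 hJ
  obtain ⟨ψ⟩ : Nonempty (J ≃ I × ℕ) := Cardinal.eq.1 (by simp [mk_prod, hI, mul_aleph0_eq hJ])
  obtain ⟨emb⟩ : Nonempty (Pattern J ↪ ι) := (le_def _ _).1 ((mk_pattern_le J).trans hι.ge)
  exact eSeparable_pi_of_isClosedDiscreteFamily he hE hs ψ (hF.comp emb.injective)

/-- If `X` is not countably compact and no cardinal `μ ≤ d(X)` is weakly
inaccessible (every uncountable regular `μ ≤ d(X)` is a successor cardinal),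
then `X^{d(X)}` is `e`-separable. -/
theorem eSeparable_pow_density_of_not_countablyCompact {X : Type u} [TopologicalSpace X]
    [T1Space X] (hncc : ¬ CountablyCompact X)
    (hnwi : ∀ μ : Cardinal.{u}, μ ≤ density X → ℵ₀ < μ → μ.IsRegular →
      ∃ ν < μ, Order.succ ν = μ) :
    ESeparable ((density X).out → X) := by
  obtain ⟨e, he, hE⟩ := exists_injective_forall_not_accPt_range hncc
  have : Infinite X := .of_injective e he
  obtain ⟨s, hs⟩ := exists_dense_range_density_out X
  have hκ := aleph0_le_density X
  exact eSeparable_pi_of_hasClosedDiscreteFamily he hE hs (by rwa [mk_out])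
    (by rw [mk_out]; exact hasClosedDiscreteFamily_of_forall_isRegular_eq_succ hκ hnwi)
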